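/- With sn, cn, dn the Jacobian elliptic functions with parameter m₁ ∈ [0,1], for fixed u ∈ (0, π/2) the function m₁ ↦ sn(u,m₁)/cn(u,m₁) is monotone decreasing in m₁ on [0,1]. -/

import Mathlib

noncomputable section

/-- The incomplete elliptic integral of the first kind (in Jacobi form). -/
def ellF (m x : ℝ) : ℝ := ∫ t in (0:ℝ)..x, 1 / Real.sqrt ((1 - t ^ 2) * (1 - m * t ^ 2))

/-- The Jacobi elliptic function `sn(u, m)`, the inverse of `x ↦ ellF m x`. -/
def sn (u m : ℝ) : ℝ := Function.invFun (ellF m) u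

/-- The Jacobi elliptic function `cn(u, m) = √(1 - sn(u,m)²)`. -/
def cn (u m : ℝ) : ℝ := Real.sqrt (1 - sn u m ^ 2)

end

/-!
For `m ≤ 1` the integrand of `ellF m` is positive and continuous on `(-1, 1)` and increases
with `m`. Hence `ellF m` is strictly increasing on `(-1, 1)`, and `ellF a ≤ ellF b` on `[0, 1)`
for `a ≤ b`. Since `ellF m ≥ ellF 0 = arcsin` for `m ≥ 0`, each `u ∈ (0, π/2)` equals `ellF m x`
for exactly one real `x`, which lies in `(0, 1)`, and `sn u m = x`. If `ellF a xa = u = ellF b xb`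
with `a ≤ b`, then `ellF a xb ≤ ellF b xb = ellF a xa`, so `xb ≤ xa`. Finally
`sn / cn = x / √(1 - x²)` is increasing in `x`.
-/

open Set MeasureTheory Real

noncomputable def ellIntegrand (m t : ℝ) : ℝ := 1 / √((1 - t ^ 2) * (1 - m * t ^ 2))

section EllipticIntegral

variable {m x y : ℝ}

theorem ellF_eq_integral_ellIntegrand (m x : ℝ) :
    ellF m x = ∫ t in (0:ℝ)..x, ellIntegrand m t :=
  rfl

theorem ellF_zero_right (m : ℝ) : ellF m 0 = 0 :=
  intervalIntegral.integral_same

theorem ellIntegrand_nonneg (m t : ℝ) : 0 ≤ ellIntegrand m t := by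
  unfold ellIntegrand; positivity

theorem ellIntegrand_radicand_pos (hm : m ≤ 1) {t : ℝ} (ht : t ∈ Ioo (-1) 1) :
    0 < (1 - t ^ 2) * (1 - m * t ^ 2) := by
  have ht2 : t ^ 2 < 1 := by nlinarith [ht.1, ht.2]
  have hmt : m * t ^ 2 ≤ t ^ 2 := by nlinarith [sq_nonneg t]
  exact mul_pos (by linarith) (by linarith)

theorem ellIntegrand_pos (hm : m ≤ 1) {t : ℝ} (ht : t ∈ Ioo (-1) 1) : 0 < ellIntegrand m t :=
  one_div_pos.mpr (sqrt_pos.mpr (ellIntegrand_radicand_pos hm ht))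

theorem continuousOn_ellIntegrand (hm : m ≤ 1) : ContinuousOn (ellIntegrand m) (Ioo (-1) 1) :=
  continuousOn_const.div (by fun_prop) fun _ ht =>
    (sqrt_pos.mpr (ellIntegrand_radicand_pos hm ht)).ne'

theorem ellIntegrand_le_ellIntegrand {a b t : ℝ} (hab : a ≤ b) (hb : b ≤ 1)
    (ht : t ∈ Ioo (-1) 1) :
    ellIntegrand a t ≤ ellIntegrand b t := by
  have h1 : 0 < 1 - t ^ 2 := by nlinarith [ht.1, ht.2]
  refine one_div_le_one_div_of_le (sqrt_pos.mpr (ellIntegrand_radicand_pos hb ht)) (sqrt_le_sqrt ?_)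
  nlinarith [mul_le_mul_of_nonneg_left (mul_le_mul_of_nonneg_right hab (sq_nonneg t)) h1.le]

theorem intervalIntegrable_ellIntegrand (hm : m ≤ 1) (hx : x ∈ Ioo (-1) 1)
    (hy : y ∈ Ioo (-1) 1) :
    IntervalIntegrable (ellIntegrand m) volume x y :=
  ((continuousOn_ellIntegrand hm).mono (ordConnected_Ioo.uIcc_subset hx hy)).intervalIntegrable

theorem hasDerivAt_ellF (hm : m ≤ 1) (hx : x ∈ Ioo (-1) 1) :
    HasDerivAt (ellF m) (ellIntegrand m x) x := by
  have h0 : (0 : ℝ) ∈ Ioo (-1) 1 := by norm_num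
  exact intervalIntegral.integral_hasDerivAt_right (intervalIntegrable_ellIntegrand hm h0 hx)
    ((continuousOn_ellIntegrand hm).stronglyMeasurableAtFilter isOpen_Ioo x hx)
    ((continuousOn_ellIntegrand hm).continuousAt (isOpen_Ioo.mem_nhds hx))

theorem continuousOn_ellF (hm : m ≤ 1) : ContinuousOn (ellF m) (Ioo (-1) 1) :=
  fun _ hx => (hasDerivAt_ellF hm hx).continuousAt.continuousWithinAt

theorem strictMonoOn_ellF (hm : m ≤ 1) : StrictMonoOn (ellF m) (Ioo (-1) 1) := by
  refine strictMonoOn_of_deriv_pos (convex_Ioo _ _) (continuousOn_ellF hm) fun x hx => ?_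
  rw [interior_Ioo] at hx
  rw [(hasDerivAt_ellF hm hx).deriv]
  exact ellIntegrand_pos hm hx

theorem ellF_zero_left (hx : x ∈ Ioo (-1) 1) : ellF 0 x = arcsin x := by
  have h0 : (0 : ℝ) ∈ Ioo (-1) 1 := by norm_num
  have hderiv : ∀ t ∈ uIcc 0 x, HasDerivAt arcsin (ellIntegrand 0 t) t := by
    intro t ht
    obtain ⟨ht1, ht2⟩ := ordConnected_Ioo.uIcc_subset h0 hx ht
    convert hasDerivAt_arcsin ht1.ne' ht2.ne using 1
    simp [ellIntegrand]
  rw [ellF_eq_integral_ellIntegrand, intervalIntegral.integral_eq_sub_of_hasDerivAt hderiv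
    (intervalIntegrable_ellIntegrand zero_le_one h0 hx), arcsin_zero, sub_zero]

theorem ellF_le_ellF_of_le_left {a b : ℝ} (hab : a ≤ b) (hb : b ≤ 1) (hx : x ∈ Ico 0 1) :
    ellF a x ≤ ellF b x := by
  have h0 : (0 : ℝ) ∈ Ioo (-1) 1 := by norm_num
  have hx' : x ∈ Ioo (-1) 1 := ⟨by linarith [hx.1], hx.2⟩
  refine intervalIntegral.integral_mono_on hx.1
    (intervalIntegrable_ellIntegrand (hab.trans hb) h0 hx')
    (intervalIntegrable_ellIntegrand hb h0 hx') fun t ht => ellIntegrand_le_ellIntegrand hab hb ?_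
  exact ⟨by linarith [ht.1], by linarith [ht.2, hx.2]⟩

theorem arcsin_le_ellF (hm : m ∈ Icc 0 1) (hx : x ∈ Ico 0 1) : arcsin x ≤ ellF m x := by
  rw [← ellF_zero_left ⟨by linarith [hx.1], hx.2⟩]
  exact ellF_le_ellF_of_le_left hm.1 hm.2 hx

theorem ellF_nonpos (hy : y ≤ 0) : ellF m y ≤ 0 := by
  rw [ellF_eq_integral_ellIntegrand, intervalIntegral.integral_symm, neg_nonpos]
  exact intervalIntegral.integral_nonneg hy fun t _ => ellIntegrand_nonneg m t

theorem ellF_le_ellF_of_intervalIntegrable (hx : 0 ≤ x) (hxy : x ≤ y)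
    (hint : IntervalIntegrable (ellIntegrand m) volume 0 y) : ellF m x ≤ ellF m y :=
  intervalIntegral.integral_mono_interval le_rfl hx hxy
    (Filter.Eventually.of_forall (ellIntegrand_nonneg m)) hint

end EllipticIntegral

section JacobiSn

variable {m x y u : ℝ}

theorem eq_of_ellF_eq (hm : m ≤ 1) (hx : x ∈ Ioo 0 1) (hxy : ellF m y = ellF m x) : y = x := by
  have hx' : x ∈ Ioo (-1) 1 := ⟨by linarith [hx.1], hx.2⟩
  have hpos : 0 < ellF m x :=
    ellF_zero_right m ▸ strictMonoOn_ellF hm (by norm_num : (0 : ℝ) ∈ Ioo (-1) 1) hx' hx.1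
  rcases le_or_gt y 0 with hy0 | hy0
  · linarith [ellF_nonpos (m := m) hy0]
  rcases lt_or_ge y 1 with hy1 | hy1
  · exact (strictMonoOn_ellF hm).injOn ⟨by linarith, hy1⟩ hx' hxy
  -- Beyond `1` the integral is either junk `0` or at least its value at a point of `(x, 1)`.
  by_cases hint : IntervalIntegrable (ellIntegrand m) volume 0 y
  · have hs : (x + 1) / 2 ∈ Ioo (-1) 1 := ⟨by linarith [hx.1], by linarith [hx.2]⟩
    have hxs : ellF m x < ellF m ((x + 1) / 2) := strictMonoOn_ellF hm hx' hs (by linarith [hx.2])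
    have hsy : ellF m ((x + 1) / 2) ≤ ellF m y :=
      ellF_le_ellF_of_intervalIntegrable (by linarith [hx.1]) (by linarith [hs.2]) hint
    linarith
  · rw [ellF_eq_integral_ellIntegrand, intervalIntegral.integral_undef hint] at hxy
    linarith

theorem sn_ellF (hm : m ≤ 1) (hx : x ∈ Ioo 0 1) : sn (ellF m x) m = x :=
  eq_of_ellF_eq hm hx (Function.invFun_eq ⟨x, rfl⟩)

theorem exists_ellF_eq (hm : m ∈ Icc 0 1) (hu : u ∈ Ioo 0 (π / 2)) :
    ∃ x ∈ Ioo 0 1, ellF m x = u := by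
  have hsin0 : 0 < sin u := sin_pos_of_pos_of_lt_pi hu.1 (by linarith [hu.2, pi_pos])
  have hsin1 : sin u < 1 := by
    simpa using sin_lt_sin_of_lt_of_le_pi_div_two (by linarith [hu.1, pi_pos]) le_rfl hu.2
  have hcont : ContinuousOn (ellF m) (Icc 0 (sin u)) :=
    (continuousOn_ellF hm.2).mono (Icc_subset_Ioo (by norm_num) hsin1)
  have hmem : u ∈ Icc (ellF m 0) (ellF m (sin u)) := by
    refine ⟨(ellF_zero_right m).trans_le hu.1.le, ?_⟩
    calc u = arcsin (sin u) := (arcsin_sin (by linarith [hu.1, pi_pos]) hu.2.le).symm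
      _ ≤ ellF m (sin u) := arcsin_le_ellF hm ⟨hsin0.le, hsin1⟩
  obtain ⟨x, hx, rfl⟩ := intermediate_value_Icc hsin0.le hcont hmem
  have hx0 : x ≠ 0 := by
    rintro rfl
    exact (ellF_zero_right m ▸ hu.1).false
  exact ⟨x, ⟨lt_of_le_of_ne hx.1 hx0.symm, hx.2.trans_lt hsin1⟩, rfl⟩

theorem le_of_ellF_eq_ellF {a b xa xb : ℝ} (hab : a ≤ b) (hb : b ≤ 1)
    (hxa : xa ∈ Ioo (-1) 1) (hxb : xb ∈ Ico 0 1) (heq : ellF a xa = ellF b xb) : xb ≤ xa := by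
  by_contra! hlt
  have hxb' : xb ∈ Ioo (-1) 1 := ⟨by linarith [hxb.1], hxb.2⟩
  have := strictMonoOn_ellF (hab.trans hb) hxa hxb' hlt
  linarith [ellF_le_ellF_of_le_left hab hb hxb]

end JacobiSn

theorem monotoneOn_div_sqrt_one_sub_sq :
    MonotoneOn (fun x : ℝ => x / √(1 - x ^ 2)) (Ico 0 1) := by
  intro x hx y hy hxy
  have hy2 : y ^ 2 < 1 := by nlinarith [hy.1, hy.2]
  exact div_le_div₀ hy.1 hxy (sqrt_pos.mpr (by linarith))
    (sqrt_le_sqrt (by nlinarith [hx.1]))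

/-- For fixed `u ∈ (0, π/2)`, the function `m₁ ↦ sn(u,m₁)/cn(u,m₁)` is monotone
decreasing on `[0,1]`. -/
theorem sc_antitone_in_parameter (u : ℝ) (hu : u ∈ Set.Ioo 0 (Real.pi / 2)) :
    AntitoneOn (fun m₁ : ℝ => sn u m₁ / cn u m₁) (Set.Icc (0:ℝ) 1) := by
  intro a ha b hb hab
  obtain ⟨xa, hxa, rfl⟩ := exists_ellF_eq ha hu
  obtain ⟨xb, hxb, hxab⟩ := exists_ellF_eq hb hu
  have hsnb : sn (ellF a xa) b = xb := hxab ▸ sn_ellF hb.2 hxb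
  have hle : xb ≤ xa :=
    le_of_ellF_eq_ellF hab hb.2 ⟨by linarith [hxa.1], hxa.2⟩ ⟨hxb.1.le, hxb.2⟩ hxab.symm
  simp only [cn, sn_ellF ha.2 hxa, hsnb]
  exact monotoneOn_div_sqrt_one_sub_sq ⟨hxb.1.le, hxb.2⟩ ⟨hxa.1.le, hxa.2⟩ hle
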